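/- arXiv:1203.2446 — 2 statements merged into one kernel-verified Lean document; each statement's English description precedes it below -/
import Mathlib

section
/- For every t ≥ 0, (3 exp(-t/2) - exp(-3t/2))/2 ≥ 1/cosh(sqrt(3) * t / 2). -/
/-!
Put `u = exp (-t / 2) ∈ (0, 1]` and `v = exp (-√3 t / 2) = u ^ √3`. Since `1 / cosh x = 2 e⁻ˣ / (1 + e⁻²ˣ)`,
the claim is `4 v ≤ A (1 + v²)` with `A = 3u - u³ ∈ [0, 2]`. Bernoulli's inequality bounds `v` by the
polynomial `w = u (1 + (√3 - 1)(u - 1))`, and `x ↦ A (1 + x²) - 4x` is antitone on `[0, 1]`, so it suffices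
to check `4 w ≤ A (1 + w²)`; after eliminating `√3²`, the difference factors as `u (1 - u)³` times a cubic
in `u` with nonnegative coefficients.
-/

open Real

lemma one_div_cosh_eq (x : ℝ) : 1 / cosh x = 2 * exp (-x) / (1 + exp (-x) ^ 2) := by
  have hx : exp x * exp (-x) = 1 := by rw [← exp_add, add_neg_cancel, exp_zero]
  rw [cosh_eq, div_eq_div_iff (by positivity) (by positivity)]
  linear_combination -hx

lemma rpow_le_mul_one_add_mul_sub {u p : ℝ} (hu : 0 < u) (hp₁ : 1 ≤ p) (hp₂ : p ≤ 2) :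
    u ^ p ≤ u * (1 + (p - 1) * (u - 1)) := by
  have hbernoulli : u ^ (p - 1) ≤ 1 + (p - 1) * (u - 1) := by
    simpa using rpow_one_add_le_one_add_mul_self (s := u - 1) (p := p - 1)
      (by linarith) (by linarith) (by linarith)
  calc u ^ p = u * u ^ (p - 1) := by
        rw [← rpow_one_add' hu.le (by linarith), add_sub_cancel]
    _ ≤ u * (1 + (p - 1) * (u - 1)) := mul_le_mul_of_nonneg_left hbernoulli hu.le

lemma antitoneOn_mul_one_add_sq_sub_four_mul {A : ℝ} (hA₀ : 0 ≤ A) (hA₂ : A ≤ 2) :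
    AntitoneOn (fun x : ℝ => A * (1 + x ^ 2) - 4 * x) (Set.Icc 0 1) := by
  rintro x ⟨hx₀, -⟩ y ⟨-, hy₁⟩ hxy
  have h : (y - x) * (A * (x + y) - 4) ≤ 0 :=
    mul_nonpos_of_nonneg_of_nonpos (by linarith) (by nlinarith)
  dsimp only
  linear_combination h

lemma four_mul_le_of_sq_eq_three {u s : ℝ} (hu₀ : 0 ≤ u) (hu₁ : u ≤ 1) (hs : s ^ 2 = 3)
    (hs₀ : 0 ≤ s) :
    4 * (u * (1 + (s - 1) * (u - 1))) ≤ (3 * u - u ^ 3) * (1 + (u * (1 + (s - 1) * (u - 1))) ^ 2) := by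
  have hs₁ : 1 ≤ s := by nlinarith
  have hs₂ : s ≤ 2 := by nlinarith
  have hcubic : 0 ≤ (4 * s - 5) + (8 * s - 11) * u + 2 * u ^ 2 + (4 - 2 * s) * u ^ 3 := by
    nlinarith [pow_nonneg hu₀ 2, pow_nonneg hu₀ 3]
  have hfactor : 0 ≤ u * (1 - u) ^ 3 *
      ((4 * s - 5) + (8 * s - 11) * u + 2 * u ^ 2 + (4 - 2 * s) * u ^ 3) := by
    have : 0 ≤ 1 - u := by linarith
    positivity
  linear_combination hfactor - (3 * u ^ 3 - 6 * u ^ 4 + 2 * u ^ 5 + 2 * u ^ 6 - u ^ 7) * hs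

lemma four_mul_rpow_sqrt_three_le {u : ℝ} (hu₀ : 0 < u) (hu₁ : u ≤ 1) :
    4 * u ^ √3 ≤ (3 * u - u ^ 3) * (1 + (u ^ √3) ^ 2) := by
  have hs : √3 ^ 2 = 3 := sq_sqrt (by norm_num)
  have hs₀ : 0 ≤ √3 := sqrt_nonneg 3
  set w := u * (1 + (√3 - 1) * (u - 1))
  have hvw : u ^ √3 ≤ w := rpow_le_mul_one_add_mul_sub hu₀ (by nlinarith) (by nlinarith)
  have hw₁ : w ≤ 1 := by nlinarith [mul_nonneg hu₀.le (sub_nonneg.mpr hu₁)]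
  have hA₀ : 0 ≤ 3 * u - u ^ 3 := by nlinarith [mul_nonneg hu₀.le (sub_nonneg.mpr hu₁)]
  have hA₂ : 3 * u - u ^ 3 ≤ 2 := by nlinarith [mul_nonneg (sq_nonneg (u - 1)) hu₀.le]
  have hanti := antitoneOn_mul_one_add_sq_sub_four_mul hA₀ hA₂ ⟨by positivity, hvw.trans hw₁⟩
    ⟨(rpow_pos_of_pos hu₀ _).le.trans hvw, hw₁⟩ hvw
  have hw := four_mul_le_of_sq_eq_three hu₀.le hu₁ hs hs₀
  dsimp only at hanti
  linarith

theorem stmt_5 (t : ℝ) (ht : 0 ≤ t) :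
    1 / cosh (Real.sqrt 3 * t / 2) ≤ (3 * exp (-t / 2) - exp (-(3 * t) / 2)) / 2 := by
  set u := exp (-t / 2)
  have hu₀ : 0 < u := exp_pos _
  have hu₁ : u ≤ 1 := exp_le_one_iff.mpr (by linarith)
  have hv : exp (-(√3 * t / 2)) = u ^ √3 := by rw [← exp_mul]; ring_nf
  have hu₃ : exp (-(3 * t) / 2) = u ^ 3 := by rw [← exp_nat_mul]; ring_nf
  rw [one_div_cosh_eq, hv, hu₃, div_le_div_iff₀ (by positivity) two_pos]
  linarith [four_mul_rpow_sqrt_three_le hu₀ hu₁]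
end

section
/- For every x with 0 < x < 1: -x(1-x) + x^3 ln(1/x) + (1 - x^3) ln(1/(1-x)) > 0. -/
/-!
Bound the two logarithms from below by `-log x ≥ 1 - x` and by the first two terms of
`-log (1 - x) = ∑ xᵏ / k`. The resulting polynomial lower bound factors as
`x² (1 - x) (3 + 5x + x²) / 2`, which is positive on `(0, 1)`.
-/

open Real Finset

lemma sum_range_pow_div_le_neg_log_one_sub {x : ℝ} (hx0 : 0 ≤ x) (hx1 : x < 1) (n : ℕ) :
    ∑ i ∈ range n, x ^ (i + 1) / (i + 1) ≤ -log (1 - x) :=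
  sum_le_hasSum _ (fun i _ ↦ by positivity)
    (hasSum_pow_div_log_of_abs_lt_one (by rwa [abs_of_nonneg hx0]))

lemma add_sq_div_two_le_neg_log_one_sub {x : ℝ} (hx0 : 0 ≤ x) (hx1 : x < 1) :
    x + x ^ 2 / 2 ≤ -log (1 - x) := by
  simpa [sum_range_succ, one_add_one_eq_two] using sum_range_pow_div_le_neg_log_one_sub hx0 hx1 2

theorem stmt_8 (x : ℝ) (hx0 : 0 < x) (hx1 : x < 1) :
    0 < -(x * (1 - x)) + x ^ 3 * log (1 / x) + (1 - x ^ 3) * log (1 / (1 - x)) := by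
  rw [one_div, one_div, log_inv, log_inv]
  have hlog : 1 - x ≤ -log x := by linarith [log_le_sub_one_of_pos hx0]
  have hlog_one_sub : x + x ^ 2 / 2 ≤ -log (1 - x) :=
    add_sq_div_two_le_neg_log_one_sub hx0.le hx1
  have hx3 : 0 ≤ 1 - x ^ 3 := by nlinarith [pow_le_one₀ hx0.le hx1.le (n := 3)]
  calc
    0 < x ^ 2 * (1 - x) * (3 + 5 * x + x ^ 2) / 2 := by
      have : 0 < 1 - x := by linarith
      positivity
    _ = -(x * (1 - x)) + x ^ 3 * (1 - x) + (1 - x ^ 3) * (x + x ^ 2 / 2) := by ring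
    _ ≤ -(x * (1 - x)) + x ^ 3 * -log x + (1 - x ^ 3) * -log (1 - x) := by
      gcongr
end
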